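/- arXiv:1308.6458 — 4 statements merged into one kernel-verified Lean document; each statement's English description precedes it below -/
import Mathlib

section
/- Let $f(x)$ be a polynomial of degree $2$ with nonnegative integer coefficients. Then for any integer $m \ge 2$, we have $\mathrm{lcm}(f(m-1), f(m)) \ge \frac{(m(m-1))^2}{2m-1}$. -/
/-!
Write `u = f(m-1)` and `v = f(m)`. Since `gcd(u, v)` divides `v - u > 0`, we get
`lcm(u, v) = u v / gcd(u, v) ≥ u v / (v - u)`. For `f = a x² + b x + c` with `a ≥ 1` and
`b, c ≥ 0`, the polynomial `(2m-1) u v - (m(m-1))² (v - u)` is a sum of manifestly nonnegative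
terms; equality holds for `f = x²`, where `u v / (v - u) = 1 / (1/(m-1)² - 1/m²)`.
-/

open Polynomial

theorem Int.mul_le_lcm_mul_sub {u v : ℤ} (hu : 0 ≤ u) (huv : u < v) :
    u * v ≤ Int.lcm u v * (v - u) := by
  have hgcd_le : (Int.gcd u v : ℤ) ≤ v - u :=
    Int.le_of_dvd (by omega) (dvd_sub (Int.gcd_dvd_right u v) (Int.gcd_dvd_left u v))
  calc u * v = Int.gcd u v * Int.lcm u v := by
        rw [← Int.natCast_mul, Int.gcd_mul_lcm, Int.natCast_mul, Int.natCast_natAbs,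
          Int.natCast_natAbs, abs_of_nonneg hu, abs_of_nonneg (hu.trans huv.le)]
    _ ≤ (v - u) * Int.lcm u v := by gcongr
    _ = Int.lcm u v * (v - u) := mul_comm _ _

theorem Polynomial.eval_eq_of_natDegree_le_two {R : Type*} [CommSemiring R] {f : R[X]}
    (hf : f.natDegree ≤ 2) (x : R) :
    f.eval x = f.coeff 2 * x ^ 2 + f.coeff 1 * x + f.coeff 0 := by
  rw [eval_eq_sum_range' (n := 3) (by omega), Finset.sum_range_succ, Finset.sum_range_succ,
    Finset.sum_range_one]
  ring

section Quadratic

variable {R : Type*} [CommRing R] [LinearOrder R] [IsStrictOrderedRing R]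
  {q : R → R} {a b c : R} (hq : ∀ x, q x = a * x ^ 2 + b * x + c)
include hq

theorem sub_pos_of_quadratic (ha : 1 ≤ a) (hb : 0 ≤ b) {m : R} (hm : 1 ≤ m) :
    0 < q m - q (m - 1) := by
  rw [hq, hq]
  nlinarith

theorem sq_mul_sub_le_mul_of_quadratic (ha : 1 ≤ a) (hb : 0 ≤ b) (hc : 0 ≤ c) {m : R}
    (hm : 1 ≤ m) :
    (m * (m - 1)) ^ 2 * (q m - q (m - 1)) ≤ (2 * m - 1) * (q (m - 1) * q m) := by
  have hmm : 0 ≤ m * (m - 1) := mul_nonneg (by linarith) (by linarith)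
  have h2m : 0 ≤ 2 * m - 1 := by linarith
  have h1 : 0 ≤ m * (m - 1) * (b * b * (2 * m - 1)) := by positivity
  have h2 : 0 ≤ m * (m - 1) * (b * (a * (2 * m - 1) ^ 2 - m * (m - 1))) :=
    mul_nonneg hmm (mul_nonneg hb (by nlinarith))
  have h3 : 0 ≤ m * (m - 1) * (a * (a - 1) * (m * (m - 1) * (2 * m - 1))) :=
    mul_nonneg hmm (mul_nonneg (mul_nonneg (by linarith) (by linarith)) (by positivity))
  have h4 : 0 ≤ (2 * m - 1) * (c * (c + b * (2 * m - 1) + a * ((m - 1) ^ 2 + m ^ 2))) :=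
    mul_nonneg h2m (mul_nonneg hc (by positivity))
  rw [hq, hq]
  linear_combination h1 + h2 + h3 + h4

end Quadratic

/-- Let `f` be a polynomial of degree 2 with nonnegative integer coefficients.
Then for any integer `m ≥ 2`, `lcm(f(m-1), f(m)) ≥ (m(m-1))² / (2m-1)`. -/
theorem lcm_consecutive_quadratic_ge (f : Polynomial ℤ) (hdeg : f.natDegree = 2)
    (hcoeff : ∀ i, 0 ≤ f.coeff i) (m : ℤ) (hm : 2 ≤ m) :
    ((m : ℚ) * ((m : ℚ) - 1)) ^ 2 / (2 * (m : ℚ) - 1)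
      ≤ (Int.lcm (f.eval (m - 1)) (f.eval m) : ℚ) := by
  have hq (x : ℤ) : f.eval x = f.coeff 2 * x ^ 2 + f.coeff 1 * x + f.coeff 0 :=
    eval_eq_of_natDegree_le_two hdeg.le x
  have hb := hcoeff 1
  have hc := hcoeff 0
  have ha : 1 ≤ f.coeff 2 := by
    have : f.coeff 2 ≠ 0 := hdeg ▸ leadingCoeff_ne_zero.mpr (by rintro rfl; simp at hdeg)
    have := hcoeff 2
    omega
  have hm1 : (1 : ℤ) ≤ m := by omega
  have hu : 0 ≤ f.eval (m - 1) := by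
    rw [hq]
    positivity
  have hdiff := sub_pos_of_quadratic hq ha hb hm1
  have hZ : (m * (m - 1)) ^ 2 ≤ Int.lcm (f.eval (m - 1)) (f.eval m) * (2 * m - 1) := by
    refine le_of_mul_le_mul_right ?_ hdiff
    calc (m * (m - 1)) ^ 2 * (f.eval m - f.eval (m - 1))
        ≤ (2 * m - 1) * (f.eval (m - 1) * f.eval m) :=
          sq_mul_sub_le_mul_of_quadratic hq ha hb hc hm1
      _ ≤ (2 * m - 1) * (Int.lcm (f.eval (m - 1)) (f.eval m) * (f.eval m - f.eval (m - 1))) :=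
          mul_le_mul_of_nonneg_left (Int.mul_le_lcm_mul_sub hu (sub_pos.mp hdiff)) (by omega)
      _ = _ := by ring
  have hmQ : (2 : ℚ) ≤ m := by exact_mod_cast hm
  rw [div_le_iff₀ (by linarith)]
  exact_mod_cast hZ
end

section
/- For every integer $n \ge 1$, we have $\mathrm{lcm}_{\lceil n/2 \rceil \le i \le n}\{i\} \ge 2^{n-1}$. -/
/-!
For `1 ≤ k ≤ n` and a prime `p`, an exponent `i` with `p ^ i ∣ k` causes no carry when `k` and
`n - k` are added in base `p`, so by Kummer's theorem `v_p(k) + v_p(C(n, k)) ≤ log_p n`; hence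
`k * C(n, k)` divides `lcm(1, …, n)`. Every `i ≤ n` has a multiple in `[⌈n/2⌉, n]`, so the lcm
over that range is `lcm(1, …, n)`. Finally, for `k = ⌈n/2⌉` we have
`k * C(n, k) = n * C(n - 1, ⌊(n - 1)/2⌋)`, which bounds the sum `2 ^ (n - 1)` of the `n`
binomial coefficients `C(n - 1, j)`.
-/

open Finset

namespace Nat

theorem factorization_mul_choose_le_log {p n k : ℕ} (hp : p.Prime) (hk : k ≠ 0) (hkn : k ≤ n) :
    (k * n.choose k).factorization p ≤ log p n := by
  have hdisj : Disjoint {i ∈ Ico 1 (log p n + 1) | p ^ i ≤ k % p ^ i + (n - k) % p ^ i}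
      {i ∈ Ico 1 (log p n + 1) | p ^ i ∣ k} := by
    simp +contextual [Finset.disjoint_right, dvd_iff_mod_eq_zero, Nat.mod_lt _ (pow_pos hp.pos _)]
  rw [factorization_mul hk (choose_ne_zero hkn), Finsupp.add_apply,
    factorization_eq_card_pow_dvd_of_lt hp (pos_of_ne_zero hk)
      (hkn.trans_lt (lt_pow_succ_log_self hp.one_lt n)),
    factorization_choose hp hkn (lt_succ_self _), add_comm, ← card_union_of_disjoint hdisj,
    filter_union_right]
  exact (card_filter_le _ _).trans_eq (card_Ico _ _)

theorem mul_choose_dvd_lcmUpto {n k : ℕ} (hk : k ≠ 0) (hkn : k ≤ n) :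
    k * n.choose k ∣ lcmUpto n := by
  rw [← factorization_prime_le_iff_dvd (mul_ne_zero hk (choose_ne_zero hkn)) (lcmUpto_ne_zero n)]
  intro p hp
  rw [factorization_lcmUpto n hp]
  exact factorization_mul_choose_le_log hp hk hkn

theorem lt_two_mul_div_mul_self {n i : ℕ} (hi : 0 < i) (hin : i ≤ n) : n < 2 * (n / i * i) := by
  have hi_le : i ≤ n / i * i := by
    simpa using Nat.mul_le_mul_right i ((one_le_div_iff hi).2 hin)
  have := lt_div_mul_add (a := n) hi
  omega

theorem lcm_Icc_half_eq_lcmUpto {n : ℕ} (hn : 0 < n) :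
    (Icc ((n + 1) / 2) n).lcm id = lcmUpto n := by
  refine dvd_antisymm (lcm_mono fun i hi => ?_) (Finset.lcm_dvd fun i hi => ?_)
  · simp only [mem_Icc] at hi ⊢
    omega
  · obtain ⟨hi0, hin⟩ := mem_Icc.1 hi
    have := lt_two_mul_div_mul_self hi0 hin
    exact (dvd_mul_left i (n / i)).trans
      (dvd_lcm (mem_Icc.2 ⟨by omega, div_mul_le_self n i⟩))

theorem two_pow_le_succ_mul_choose_half (m : ℕ) : 2 ^ m ≤ (m + 1) * m.choose (m / 2) :=
  calc 2 ^ m = ∑ j ∈ range (m + 1), m.choose j := (sum_range_choose m).symm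
    _ ≤ ∑ _j ∈ range (m + 1), m.choose (m / 2) := sum_le_sum fun j _ => choose_le_middle j m
    _ = (m + 1) * m.choose (m / 2) := by simp

end Nat

open Nat in
/-- For every integer `n ≥ 1`, `lcm_{⌈n/2⌉ ≤ i ≤ n} i ≥ 2^(n-1)`. -/
theorem lcm_Icc_half_ge_two_pow_pred (n : ℕ) (hn : 1 ≤ n) :
    2 ^ (n - 1) ≤ (Finset.Icc ((n + 1) / 2) n).lcm id := by
  rw [lcm_Icc_half_eq_lcmUpto hn]
  obtain ⟨m, rfl⟩ : ∃ m, n = m + 1 := ⟨n - 1, by omega⟩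
  calc 2 ^ (m + 1 - 1) = 2 ^ m := by simp
    _ ≤ (m + 1) * m.choose (m / 2) := two_pow_le_succ_mul_choose_half m
    _ = (m / 2 + 1) * (m + 1).choose (m / 2 + 1) := by rw [add_one_mul_choose_eq, mul_comm]
    _ ≤ lcmUpto (m + 1) :=
      le_of_dvd (lcmUpto_pos _) (mul_choose_dvd_lcmUpto (succ_ne_zero _) (by omega))
end

section
/- Let $f(x) = a_1 x + a_0$ with integers $a_1 \ge 1$ and $a_0 \ge 1$. Then for every integer $n \ge 4$, $\mathrm{lcm}(f(n-2), f(n-1), f(n)) \ge \frac{1}{2}(n-1)n(n+1)$. -/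
/-- Let `f(x) = a₁x + a₀` with integers `a₁, a₀ ≥ 1`. Then for every `n ≥ 4`,
`lcm(f(n-2), f(n-1), f(n)) ≥ (n-1)n(n+1)/2`. -/
theorem lcm_three_consecutive_linear_ge (a₀ a₁ n : ℕ) (ha₁ : 1 ≤ a₁)
    (ha₀ : 1 ≤ a₀) (hn : 4 ≤ n) :
    (n - 1) * n * (n + 1) ≤
      2 * Nat.lcm (a₁ * (n - 2) + a₀) (Nat.lcm (a₁ * (n - 1) + a₀) (a₁ * n + a₀)) := by
  obtain ⟨m, rfl⟩ : ∃ m, n = m + 4 := ⟨n - 4, by omega⟩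
  have h2 : m + 4 - 2 = m + 2 := by omega
  have h1 : m + 4 - 1 = m + 3 := by omega
  rw [h2, h1]
  set g := Nat.gcd a₁ a₀ with hg
  have hg0 : 0 < g := Nat.gcd_pos_of_pos_left _ ha₁
  set p := a₁ / g with hp
  set q := a₀ / g with hq
  have hpg : g * p = a₁ := Nat.mul_div_cancel' (Nat.gcd_dvd_left _ _)
  have hqg : g * q = a₀ := Nat.mul_div_cancel' (Nat.gcd_dvd_right _ _)
  have hcop : Nat.Coprime p q := Nat.coprime_div_gcd_div_gcd hg0
  have hp1 : 1 ≤ p := by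
    rcases Nat.eq_zero_or_pos p with h | h
    · rw [h, Nat.mul_zero] at hpg; omega
    · exact h
  have hq1 : 1 ≤ q := by
    rcases Nat.eq_zero_or_pos q with h | h
    · rw [h, Nat.mul_zero] at hqg; omega
    · exact h
  set B := p * (m + 2) + q with hB
  set C := p * (m + 3) + q with hC
  set D := p * (m + 4) + q with hD
  -- coprimality facts
  have hBC : Nat.Coprime B C := by
    have hdB : Nat.gcd B C ∣ B := Nat.gcd_dvd_left _ _
    have hdC : Nat.gcd B C ∣ C := Nat.gcd_dvd_right _ _
    have hCe : C = B + p := by rw [hB, hC]; ring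
    have hdp : Nat.gcd B C ∣ p := (Nat.dvd_add_right hdB).mp (hCe ▸ hdC)
    have hdq : Nat.gcd B C ∣ q := (Nat.dvd_add_right (hdp.mul_right (m + 2))).mp hdB
    exact Nat.dvd_one.mp (hcop ▸ Nat.dvd_gcd hdp hdq)
  have hCD : Nat.Coprime C D := by
    have hdC : Nat.gcd C D ∣ C := Nat.gcd_dvd_left _ _
    have hdD : Nat.gcd C D ∣ D := Nat.gcd_dvd_right _ _
    have hDe : D = C + p := by rw [hC, hD]; ring
    have hdp : Nat.gcd C D ∣ p := (Nat.dvd_add_right hdC).mp (hDe ▸ hdD)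
    have hdq : Nat.gcd C D ∣ q := (Nat.dvd_add_right (hdp.mul_right (m + 3))).mp hdC
    exact Nat.dvd_one.mp (hcop ▸ Nat.dvd_gcd hdp hdq)
  have hBD2 : Nat.gcd B D ∣ 2 := by
    have hdB : Nat.gcd B D ∣ B := Nat.gcd_dvd_left _ _
    have hdD : Nat.gcd B D ∣ D := Nat.gcd_dvd_right _ _
    have hDe : D = B + p * 2 := by rw [hB, hD]; ring
    have hdp : Nat.gcd B D ∣ p * 2 := (Nat.dvd_add_right hdB).mp (hDe ▸ hdD)
    have hd2B : Nat.gcd B D ∣ 2 * (p * (m + 2)) + 2 * q := by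
      rw [show 2 * (p * (m + 2)) + 2 * q = 2 * B by rw [hB]; ring]
      exact hdB.mul_left 2
    have hdpm : Nat.gcd B D ∣ 2 * (p * (m + 2)) := by
      have : Nat.gcd B D ∣ p * 2 * (m + 2) := hdp.mul_right _
      rwa [show p * 2 * (m + 2) = 2 * (p * (m + 2)) by ring] at this
    have hd2q : Nat.gcd B D ∣ 2 * q := (Nat.dvd_add_right hdpm).mp hd2B
    have hd2p : Nat.gcd B D ∣ 2 * p := by
      rwa [show p * 2 = 2 * p by ring] at hdp
    have : Nat.gcd B D ∣ Nat.gcd (2 * p) (2 * q) := Nat.dvd_gcd hd2p hd2q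
    rwa [Nat.gcd_mul_left, hcop, Nat.mul_one] at this
  -- rewrite lcm structure
  have e1 : a₁ * (m + 2) + a₀ = g * B := by rw [← hpg, ← hqg, hB]; ring
  have e2 : a₁ * (m + 3) + a₀ = g * C := by rw [← hpg, ← hqg, hC]; ring
  have e3 : a₁ * (m + 4) + a₀ = g * D := by rw [← hpg, ← hqg, hD]; ring
  rw [e1, e2, e3, Nat.lcm_mul_left, Nat.lcm_mul_left]
  rw [Nat.Coprime.lcm_eq_mul hCD]
  -- 2 * lcm B (C * D) ≥ B * C * D
  have hgcd : Nat.gcd B (C * D) = Nat.gcd B D :=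
    Nat.Coprime.gcd_mul_left_cancel_right D hBC.symm
  have hprod : Nat.gcd B (C * D) * Nat.lcm B (C * D) = B * (C * D) :=
    Nat.gcd_mul_lcm _ _
  have hle2 : Nat.gcd B (C * D) ≤ 2 := by
    rw [hgcd]; exact Nat.le_of_dvd (by norm_num) hBD2
  have hmain : B * (C * D) ≤ 2 * Nat.lcm B (C * D) := by
    calc B * (C * D) = Nat.gcd B (C * D) * Nat.lcm B (C * D) := hprod.symm
      _ ≤ 2 * Nat.lcm B (C * D) := Nat.mul_le_mul_right _ hle2
  -- size bounds
  have hgB : m + 3 ≤ g * B := by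
    rw [← e1]
    have := Nat.add_le_add (Nat.mul_le_mul_right (m + 2) ha₁) ha₀
    omega
  have hCge : m + 4 ≤ C := by
    rw [hC]
    have := Nat.add_le_add (Nat.mul_le_mul_right (m + 3) hp1) hq1
    omega
  have hDge : m + 5 ≤ D := by
    rw [hD]
    have := Nat.add_le_add (Nat.mul_le_mul_right (m + 4) hp1) hq1
    omega
  calc (m + 3) * (m + 4) * (m + 4 + 1)
      ≤ (g * B) * C * D := by
        exact Nat.mul_le_mul (Nat.mul_le_mul hgB hCge) hDge
    _ = g * (B * (C * D)) := by ring
    _ ≤ g * (2 * Nat.lcm B (C * D)) := Nat.mul_le_mul_left _ hmain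
    _ = 2 * (g * Nat.lcm B (C * D)) := by ring
end

section
/- (Oon's bound, recovered as a special case) Let $c \ge 1$ and $n \ge 1$ be integers. Then $\mathrm{lcm}_{1 \le i \le n}\{i^2 + c\} \ge 2^n$. -/
open Finset
namespace OonAux

def zP (c m n : ℕ) : Zsqrtd (-(c:ℤ)) := ∏ j ∈ Finset.Icc m n, ⟨(j:ℤ), 1⟩

lemma zP_left (c m n : ℕ) (h : m ≤ n) :
    zP c m n = (⟨(m:ℤ),1⟩ : Zsqrtd (-(c:ℤ))) * zP c (m+1) n := by
  unfold zP
  rw [Finset.Icc_eq_cons_Ioc h, Finset.prod_cons, ← Finset.Icc_add_one_left_eq_Ioc]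

lemma zP_top (c m n : ℕ) (h : m ≤ n + 1) :
    zP c m (n+1) = zP c m n * ⟨((n:ℤ)+1), 1⟩ := by
  unfold zP
  rw [Finset.prod_Icc_succ_top h]
  norm_num

lemma conj_mul (c : ℕ) (a : ℤ) :
    (⟨a,-1⟩ : Zsqrtd (-(c:ℤ))) * ⟨a, 1⟩ = (⟨a^2 + c, 0⟩ : Zsqrtd (-(c:ℤ))) := by
  ext <;> simp [Zsqrtd.re_mul, Zsqrtd.im_mul] <;> ring

lemma key_im (c m n : ℕ) (h : m < n) :
    ((n:ℤ) - m) * (zP c m n).im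
      = ((n:ℤ)^2 + c) * (zP c m (n-1)).im - ((m:ℤ)^2 + c) * (zP c (m+1) n).im := by
  have h1 : (⟨(n:ℤ),-1⟩ : Zsqrtd (-(c:ℤ))) * zP c m n
      = (⟨(n:ℤ)^2 + c, 0⟩ : Zsqrtd (-(c:ℤ))) * zP c m (n-1) := by
    obtain ⟨n', rfl⟩ : ∃ n', n = n' + 1 := ⟨n - 1, by omega⟩
    rw [zP_top c m n' (by omega)]
    rw [mul_comm (zP c m n'), ← mul_assoc]
    rw [show ((n'+1:ℕ):ℤ) = (n':ℤ)+1 by push_cast; ring, conj_mul]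
    simp only [Nat.add_sub_cancel]
  have h2 : (⟨(m:ℤ),-1⟩ : Zsqrtd (-(c:ℤ))) * zP c m n
      = (⟨(m:ℤ)^2 + c, 0⟩ : Zsqrtd (-(c:ℤ))) * zP c (m+1) n := by
    rw [zP_left c m n (le_of_lt h), ← mul_assoc, conj_mul]
  have h3 : (⟨(n:ℤ) - m, 0⟩ : Zsqrtd (-(c:ℤ))) * zP c m n
      = (⟨(n:ℤ)^2 + c, 0⟩ : Zsqrtd (-(c:ℤ))) * zP c m (n-1)
        - (⟨(m:ℤ)^2 + c, 0⟩ : Zsqrtd (-(c:ℤ))) * zP c (m+1) n := by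
    have hsub : (⟨(n:ℤ),-1⟩ : Zsqrtd (-(c:ℤ))) - ⟨(m:ℤ),-1⟩ = ⟨(n:ℤ)-m,0⟩ := by
      ext <;> simp
    rw [← hsub, sub_mul, h1, h2]
  have h4 := congrArg Zsqrtd.im h3
  simpa [Zsqrtd.im_mul, Zsqrtd.im_sub] using h4

end OonAux

namespace OonAux2
open OonAux

lemma zP_norm (c m n : ℕ) :
    (zP c m n).norm = ∏ j ∈ Finset.Icc m n, ((j:ℤ)^2 + c) := by
  have h0 : (zP c m n).norm = Zsqrtd.normMonoidHom (zP c m n) := rfl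
  rw [h0, zP, map_prod]
  refine Finset.prod_congr rfl fun j _ => ?_
  show Zsqrtd.norm _ = _
  rw [Zsqrtd.norm_def]
  push_cast
  ring

lemma prod_pos (c m n : ℕ) (hc : 1 ≤ c) : (0:ℤ) < ∏ j ∈ Finset.Icc m n, ((j:ℤ)^2 + c) :=
  Finset.prod_pos fun j _ => by
    have h1 : (1:ℤ) ≤ (c:ℤ) := by exact_mod_cast hc
    nlinarith [sq_nonneg (j:ℤ)]

lemma zP_self (c m : ℕ) : zP c m m = ⟨(m:ℤ), 1⟩ := by
  unfold zP; rw [Finset.Icc_self, Finset.prod_singleton]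

lemma zP_dvd (c : ℕ) (L : ℤ) :
    ∀ k m n : ℕ, m ≤ n → n - m = k →
    (∀ j : ℕ, m ≤ j → j ≤ n → ((j:ℤ)^2 + c) ∣ L) →
    (∏ j ∈ Finset.Icc m n, ((j:ℤ)^2 + c)) ∣ (k.factorial : ℤ) * (zP c m n).im * L := by
  intro k
  induction k with
  | zero =>
    intro m n hmn hk hdvd
    have hm : m = n := by omega
    subst hm
    rw [Finset.Icc_self, Finset.prod_singleton, zP_self]
    simpa using hdvd m le_rfl le_rfl
  | succ k ih =>
    intro m n hmn hk hdvd
    have hmn' : m < n := by omega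
    have h1 := ih m (n-1) (by omega) (by omega) (fun j hj1 hj2 => hdvd j hj1 (by omega))
    have h2 := ih (m+1) n (by omega) (by omega) (fun j hj1 hj2 => hdvd j (by omega) hj2)
    have hsplitTop : (∏ j ∈ Finset.Icc m n, ((j:ℤ)^2 + c))
        = (∏ j ∈ Finset.Icc m (n-1), ((j:ℤ)^2 + c)) * ((n:ℤ)^2 + c) := by
      obtain ⟨n', rfl⟩ : ∃ n', n = n' + 1 := ⟨n - 1, by omega⟩
      rw [Finset.prod_Icc_succ_top (by omega)]
      simp
    have hsplitBot : (∏ j ∈ Finset.Icc m n, ((j:ℤ)^2 + c))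
        = ((m:ℤ)^2 + c) * ∏ j ∈ Finset.Icc (m+1) n, ((j:ℤ)^2 + c) := by
      rw [Finset.Icc_eq_cons_Ioc (by omega), Finset.prod_cons, ← Finset.Icc_add_one_left_eq_Ioc]
    have key := key_im c m n hmn'
    have hrw : (((k+1).factorial : ℤ)) * (zP c m n).im * L
        = ((n:ℤ)^2+c) * ((k.factorial : ℤ) * (zP c m (n-1)).im * L)
          - ((m:ℤ)^2+c) * ((k.factorial : ℤ) * (zP c (m+1) n).im * L) := by
      have hfac : (((k+1).factorial : ℤ)) = (k+1) * (k.factorial : ℤ) := by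
        push_cast [Nat.factorial_succ]; ring
      have hnm : ((n:ℤ) - m) = ((k:ℤ)+1) := by push_cast; omega
      rw [hfac]
      rw [hnm] at key
      linear_combination (k.factorial : ℤ) * L * key
    rw [hrw]
    refine dvd_sub ?_ ?_
    · rw [hsplitTop]
      rw [mul_comm]
      exact mul_dvd_mul_left _ h1
    · rw [hsplitBot]
      exact mul_dvd_mul_left _ h2

lemma zP_im_ne (c m n : ℕ) (hc : 1 ≤ c) (h : m ≤ n) :
    (zP c m n).im ≠ 0 ∨ (zP c (m+1) n).im ≠ 0 := by
  by_contra hcon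
  push_neg at hcon
  obtain ⟨h1, h2⟩ := hcon
  have hsplit := zP_left c m n h
  have him := congrArg Zsqrtd.im hsplit
  rw [h1] at him
  simp [Zsqrtd.im_mul, h2] at him
  have hzero : zP c (m+1) n = 0 := by
    ext
    · exact him.symm
    · exact h2
  have hnorm := zP_norm c (m+1) n
  rw [hzero, Zsqrtd.norm_zero] at hnorm
  have := prod_pos c (m+1) n hc
  omega

lemma zP_norm_ge (c m n : ℕ) : (c:ℤ) * (zP c m n).im ^ 2 ≤ (zP c m n).norm := by
  rw [Zsqrtd.norm_def]
  nlinarith [sq_nonneg (zP c m n).re, sq_nonneg (zP c m n).im]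

end OonAux2

namespace OonAux3
open OonAux OonAux2

lemma lcm_ne_zero (c n : ℕ) : (Finset.Icc 1 n).lcm (fun i => i ^ 2 + c) ≠ 0 := by
  intro h
  rw [Finset.lcm_eq_zero_iff] at h
  obtain ⟨i, hi, hzero⟩ := h
  simp only [Finset.mem_coe, Finset.mem_Icc] at hi
  have h1 : 0 < i^2 := pow_pos (by omega) 2
  linarith [hzero, h1]

lemma master_aux (c n a : ℕ) (hc : 1 ≤ c) (ha : 1 ≤ a) (han : a ≤ n)
    (hQ : (zP c a n).im ≠ 0)
    (H : 4^n * ((n-a).factorial)^2 ≤ ∏ j ∈ Finset.Icc a n, (j^2+1)) :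
    2^n ≤ (Finset.Icc 1 n).lcm (fun i => i ^ 2 + c) := by
  set Lnat := (Finset.Icc 1 n).lcm (fun i => i ^ 2 + c) with hLnat
  set L : ℤ := (Lnat : ℤ) with hL
  have hL0 : 0 < L := by
    have := lcm_ne_zero c n
    rw [← hLnat] at this
    positivity
  have hdvd : ∀ j : ℕ, a ≤ j → j ≤ n → ((j:ℤ)^2 + c) ∣ L := by
    intro j hj1 hj2
    have hmem : j ∈ Finset.Icc 1 n := by simp only [Finset.mem_Icc]; omega
    have := Finset.dvd_lcm (f := fun i => i ^ 2 + c) hmem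
    rw [← hLnat] at this
    have h2 : ((j^2+c : ℕ) : ℤ) ∣ L := Int.natCast_dvd_natCast.mpr this
    push_cast at h2
    exact h2
  set k := n - a with hk
  set Q : ℤ := (zP c a n).im with hQdef
  set P : ℤ := ∏ j ∈ Finset.Icc a n, ((j:ℤ)^2 + c) with hP
  have hPpos : 0 < P := prod_pos c a n hc
  have hdiv : P ∣ (k.factorial : ℤ) * Q * L := zP_dvd c L k a n han rfl hdvd
  have hX0 : (k.factorial : ℤ) * Q * L ≠ 0 := by
    have : (k.factorial : ℤ) ≠ 0 := by positivity
    have hL' : L ≠ 0 := by positivity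
    exact mul_ne_zero (mul_ne_zero this hQ) hL'
  have hPle : P ≤ |(k.factorial : ℤ) * Q * L| :=
    Int.le_of_dvd (abs_pos.mpr hX0) ((dvd_abs _ _).mpr hdiv)
  have hsq : P^2 ≤ (k.factorial : ℤ)^2 * Q^2 * L^2 := by
    have h1 : P^2 ≤ |(k.factorial : ℤ) * Q * L|^2 := by
      apply pow_le_pow_left₀ hPpos.le hPle
    calc P^2 ≤ |(k.factorial : ℤ) * Q * L|^2 := h1
      _ = (k.factorial : ℤ)^2 * Q^2 * L^2 := by rw [sq_abs]; ring
  have hQ2 : (c:ℤ) * Q^2 ≤ P := by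
    have := zP_norm_ge c a n
    rw [zP_norm c a n] at this
    exact this
  have hcP : (c:ℤ) * P ≤ (k.factorial : ℤ)^2 * L^2 := by
    have hcnn : (0:ℤ) ≤ (c:ℤ) := Nat.cast_nonneg c
    have hstep : (c:ℤ) * P^2 ≤ (k.factorial : ℤ)^2 * ((c:ℤ) * Q^2) * L^2 := by
      have := mul_le_mul_of_nonneg_left hsq hcnn
      linarith [this]
    have hf : (0:ℤ) ≤ (k.factorial : ℤ)^2 := by positivity
    have hl : (0:ℤ) ≤ L^2 := by positivity
    have hstep2 : (k.factorial : ℤ)^2 * ((c:ℤ) * Q^2) * L^2 ≤ (k.factorial : ℤ)^2 * P * L^2 := by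
      have h := mul_le_mul_of_nonneg_left hQ2 (mul_nonneg hf hl)
      linarith [h]
    have : (c:ℤ) * P * P ≤ ((k.factorial : ℤ)^2 * L^2) * P := by nlinarith [hstep, hstep2]
    exact le_of_mul_le_mul_right this hPpos
  have hc' : (1:ℤ) ≤ (c:ℤ) := by exact_mod_cast hc
  have hprodle : (∏ j ∈ Finset.Icc a n, ((j:ℤ)^2+1)) ≤ P := by
    refine Finset.prod_le_prod (fun j _ => by positivity) (fun j _ => by linarith)
  have hprodnn : (0:ℤ) ≤ ∏ j ∈ Finset.Icc a n, ((j:ℤ)^2+1) :=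
    Finset.prod_nonneg (fun j _ => by positivity)
  have hprod1 : (∏ j ∈ Finset.Icc a n, ((j:ℤ)^2+1)) ≤ (c:ℤ) * P := by
    nlinarith [hprodle, hPpos]
  have hHint : ((4:ℤ)^n * ((k.factorial : ℤ))^2) ≤ ∏ j ∈ Finset.Icc a n, ((j:ℤ)^2+1) := by
    have hcast := (Nat.cast_le (α := ℤ)).mpr H
    push_cast at hcast
    exact hcast
  have hfinal : (4:ℤ)^n ≤ L^2 := by
    have hk2 : (0:ℤ) < ((k.factorial : ℤ))^2 := by positivity
    have : (4:ℤ)^n * ((k.factorial : ℤ))^2 ≤ L^2 * ((k.factorial : ℤ))^2 := by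
      linarith [hHint, hprod1, hcP]
    exact le_of_mul_le_mul_right this hk2
  have h2n : (2:ℤ)^n ≤ L := by
    have h4 : (4:ℤ)^n = ((2:ℤ)^n)^2 := by
      rw [← pow_mul, show (4:ℤ) = 2^2 by norm_num, ← pow_mul, Nat.mul_comm]
    nlinarith [hfinal, hL0, h4, sq_nonneg (L - 2^n), pow_pos (show (0:ℤ) < 2 by norm_num) n]
  rw [hL] at h2n
  exact_mod_cast h2n

end OonAux3

namespace OonAux4
open OonAux OonAux2 OonAux3

lemma master (c n m : ℕ) (hc : 1 ≤ c) (hm : 1 ≤ m) (hmn : m < n)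
    (H1 : 4^n * ((n-m).factorial)^2 ≤ ∏ j ∈ Finset.Icc m n, (j^2+1))
    (H2 : 4^n * ((n-m-1).factorial)^2 ≤ ∏ j ∈ Finset.Icc (m+1) n, (j^2+1)) :
    2^n ≤ (Finset.Icc 1 n).lcm (fun i => i ^ 2 + c) := by
  rcases zP_im_ne c m n hc (le_of_lt hmn) with hQ | hQ
  · exact master_aux c n m hc hm (le_of_lt hmn) hQ H1
  · have : n - (m+1) = n - m - 1 := by omega
    exact master_aux c n (m+1) hc (by omega) (by omega) hQ (by rw [this]; exact H2)

lemma prod_Icc_id' (m : ℕ) :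
    ∀ n, m + 1 ≤ n → m.factorial * ∏ j ∈ Finset.Icc (m+1) n, j = n.factorial := by
  intro n
  induction n with
  | zero => intro h; exact absurd h (by omega)
  | succ n ih =>
    intro h
    rcases Nat.lt_or_ge n (m+1) with h' | h'
    · have : n = m := by omega
      subst this
      rw [Finset.Icc_self, Finset.prod_singleton]
      simp [Nat.factorial_succ, Nat.mul_comm]
    · rw [Finset.prod_Icc_succ_top (by omega), Nat.factorial_succ, ← Nat.mul_assoc, ih h']
      ring

lemma prod_Icc_id (m n : ℕ) (hm : 1 ≤ m) (hmn : m ≤ n) :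
    (m-1).factorial * ∏ j ∈ Finset.Icc m n, j = n.factorial := by
  obtain ⟨m', rfl⟩ : ∃ m', m = m' + 1 := ⟨m - 1, by omega⟩
  simpa using prod_Icc_id' m' n hmn

lemma conv (n m : ℕ) (hm : 1 ≤ m) (hmn : m ≤ n)
    (h : 2^n * (m-1).factorial * (n-m).factorial ≤ n.factorial) :
    4^n * ((n-m).factorial)^2 ≤ ∏ j ∈ Finset.Icc m n, (j^2+1) := by
  have hp := prod_Icc_id m n hm hmn
  have h2 : (∏ j ∈ Finset.Icc m n, j)^2 ≤ ∏ j ∈ Finset.Icc m n, (j^2+1) := by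
    rw [← Finset.prod_pow]
    exact Finset.prod_le_prod' fun j _ => by nlinarith
  have hsq : (2^n * (m-1).factorial * (n-m).factorial)^2 ≤ (n.factorial)^2 :=
    Nat.pow_le_pow_left h 2
  rw [← hp] at hsq
  have h4 : (4:ℕ)^n = (2^n)^2 := by
    rw [← pow_mul, show (4:ℕ) = 2^2 by norm_num, ← pow_mul, Nat.mul_comm]
  have key : ((m-1).factorial)^2 * (4^n * ((n-m).factorial)^2)
      ≤ ((m-1).factorial)^2 * (∏ j ∈ Finset.Icc m n, j)^2 := by
    calc ((m-1).factorial)^2 * (4^n * ((n-m).factorial)^2)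
        = (2^n * (m-1).factorial * (n-m).factorial)^2 := by rw [h4]; ring
      _ ≤ ((m-1).factorial * ∏ j ∈ Finset.Icc m n, j)^2 := hsq
      _ = ((m-1).factorial)^2 * (∏ j ∈ Finset.Icc m n, j)^2 := by ring
  have hpos : 0 < ((m-1).factorial)^2 := by positivity
  exact le_trans (Nat.le_of_mul_le_mul_left key hpos) h2

lemma F_even : ∀ M : ℕ, 4 ≤ M → 2^(2*M) * M.factorial * (M-1).factorial ≤ (2*M).factorial := by
  intro M hM
  induction M, hM using Nat.le_induction with
  | base => decide
  | succ M h IH =>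
      have e1 : 2*(M+1) = 2*M + 1 + 1 := by ring
      rw [e1, Nat.factorial_succ, Nat.factorial_succ]
      have e2 : (M+1).factorial = (M+1) * M.factorial := Nat.factorial_succ M
      have e3 : (M+1) - 1 = M := by omega
      have e4 : M.factorial = M * (M-1).factorial := by
        obtain ⟨M', rfl⟩ : ∃ M', M = M' + 1 := ⟨M - 1, by omega⟩
        simp [Nat.factorial_succ]
      calc 2^(2*M+1+1) * (M+1).factorial * ((M+1)-1).factorial
          = (4*(M+1)*M) * (2^(2*M) * M.factorial * (M-1).factorial) := by
            rw [e2, e3]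
            nth_rewrite 1 [e4]
            ring
        _ ≤ (4*(M+1)*M) * (2*M).factorial := Nat.mul_le_mul_left _ IH
        _ ≤ ((2*M+1+1) * ((2*M+1) * (2*M).factorial)) := by
            rw [← Nat.mul_assoc]
            apply Nat.mul_le_mul_right
            nlinarith

lemma F_odd : ∀ M : ℕ, 5 ≤ M →
    2^(2*M+1) * (M+1).factorial * (M-1).factorial ≤ (2*M+1).factorial := by
  intro M hM
  induction M, hM using Nat.le_induction with
  | base => decide
  | succ M h IH =>
    have e1 : 2*(M+1)+1 = 2*M+1+1+1 := by ring
    rw [e1, Nat.factorial_succ, Nat.factorial_succ]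
    have e2 : (M+1+1).factorial = (M+2) * (M+1).factorial := Nat.factorial_succ (M+1)
    have e3 : (M+1) - 1 = M := by omega
    have e4 : M.factorial = M * (M-1).factorial := by
      obtain ⟨M', rfl⟩ : ∃ M', M = M' + 1 := ⟨M - 1, by omega⟩
      simp [Nat.factorial_succ]
    calc 2^(2*M+1+1+1) * (M+1+1).factorial * ((M+1)-1).factorial
        = (4*(M+2)*M) * (2^(2*M+1) * (M+1).factorial * (M-1).factorial) := by
          rw [e2, e3]
          nth_rewrite 1 [e4]
          ring
      _ ≤ (4*(M+2)*M) * (2*M+1).factorial := Nat.mul_le_mul_left _ IH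
      _ ≤ ((2*M+1+1+1) * ((2*M+1+1) * (2*M+1).factorial)) := by
          rw [← Nat.mul_assoc]
          apply Nat.mul_le_mul_right
          nlinarith

lemma pair (c n i j : ℕ) (hi : 1 ≤ i) (hij : i < j) (hj : j ≤ n) :
    (i^2+c) * (j^2+c) ≤ (j^2 - i^2) * (Finset.Icc 1 n).lcm (fun i => i^2+c) := by
  set L := (Finset.Icc 1 n).lcm (fun i => i^2+c) with hL
  have hiL : i^2+c ∣ L := Finset.dvd_lcm (by simp only [Finset.mem_Icc]; omega)
  have hjL : j^2+c ∣ L := Finset.dvd_lcm (by simp only [Finset.mem_Icc]; omega)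
  have hlcm : Nat.lcm (i^2+c) (j^2+c) ∣ L := Nat.lcm_dvd hiL hjL
  have hL0 : L ≠ 0 := by rw [hL]; exact lcm_ne_zero c n
  have h1 : Nat.lcm (i^2+c) (j^2+c) ≤ L := Nat.le_of_dvd (by omega) hlcm
  have hij2 : i^2 < j^2 := Nat.pow_lt_pow_left hij (by norm_num)
  have hg : Nat.gcd (i^2+c) (j^2+c) ∣ j^2 - i^2 := by
    have := Nat.dvd_sub (Nat.gcd_dvd_right (i^2+c) (j^2+c)) (Nat.gcd_dvd_left (i^2+c) (j^2+c))
    have he : (j^2+c) - (i^2+c) = j^2 - i^2 := by omega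
    rwa [he] at this
  have hg2 : Nat.gcd (i^2+c) (j^2+c) ≤ j^2 - i^2 := Nat.le_of_dvd (by omega) hg
  calc (i^2+c) * (j^2+c) = Nat.gcd (i^2+c) (j^2+c) * Nat.lcm (i^2+c) (j^2+c) :=
        (Nat.gcd_mul_lcm _ _).symm
    _ ≤ (j^2 - i^2) * L := Nat.mul_le_mul hg2 h1

lemma single (c n j : ℕ) (hj1 : 1 ≤ j) (hj : j ≤ n) :
    j^2 + c ≤ (Finset.Icc 1 n).lcm (fun i => i^2+c) := by
  have hjL : j^2+c ∣ (Finset.Icc 1 n).lcm (fun i => i^2+c) :=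
    Finset.dvd_lcm (by simp only [Finset.mem_Icc]; omega)
  have hL0 := lcm_ne_zero c n
  exact Nat.le_of_dvd (by omega) hjL

end OonAux4

/-- Oon's bound: for integers `c ≥ 1` and `n ≥ 1`,
`lcm_{1 ≤ i ≤ n} (i² + c) ≥ 2^n`. -/
theorem lcm_quadratic_ge_two_pow (c n : ℕ) (hc : 1 ≤ c) (hn : 1 ≤ n) :
    2 ^ n ≤ (Finset.Icc 1 n).lcm (fun i => i ^ 2 + c) := by
  rcases Nat.lt_or_ge n 8 with hsmall | hlarge
  · -- n ≤ 7
    interval_cases n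
    · calc 2^1 ≤ 1^2 + c := by omega
        _ ≤ _ := OonAux4.single c 1 1 le_rfl le_rfl
    · calc 2^2 ≤ 2^2 + c := by omega
        _ ≤ _ := OonAux4.single c 2 2 (by omega) le_rfl
    · calc 2^3 ≤ 3^2 + c := by omega
        _ ≤ _ := OonAux4.single c 3 3 (by omega) le_rfl
    · calc 2^4 ≤ 4^2 + c := by omega
        _ ≤ _ := OonAux4.single c 4 4 (by omega) le_rfl
    · -- n = 5
      have h := OonAux4.pair c 5 4 5 (by omega) (by omega) le_rfl
      have h2 : (4^2+1) * (5^2+1) ≤ (4^2+c) * (5^2+c) :=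
        Nat.mul_le_mul (by omega) (by omega)
      norm_num at h h2 ⊢
      omega
    · have h := OonAux4.pair c 6 5 6 (by omega) (by omega) le_rfl
      have h2 : (5^2+1) * (6^2+1) ≤ (5^2+c) * (6^2+c) :=
        Nat.mul_le_mul (by omega) (by omega)
      norm_num at h h2 ⊢
      omega
    · have h := OonAux4.pair c 7 6 7 (by omega) (by omega) le_rfl
      have h2 : (6^2+1) * (7^2+1) ≤ (6^2+c) * (7^2+c) :=
        Nat.mul_le_mul (by omega) (by omega)
      norm_num at h h2 ⊢
      omega
  · rcases Nat.even_or_odd n with ⟨M, hM⟩ | ⟨M, hM⟩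
    · -- n = 2M even, M ≥ 4
      have hM4 : 4 ≤ M := by omega
      have hF := OonAux4.F_even M hM4
      have hn2 : n = 2*M := by omega
      subst hn2
      refine OonAux4.master c (2*M) M hc (by omega) (by omega) ?_ ?_
      · refine OonAux4.conv (2*M) M (by omega) (by omega) ?_
        have he : 2*M - M = M := by omega
        rw [he]
        calc 2^(2*M) * (M-1).factorial * M.factorial
            = 2^(2*M) * M.factorial * (M-1).factorial := by ring
          _ ≤ (2*M).factorial := hF
      · refine OonAux4.conv (2*M) (M+1) (by omega) (by omega) ?_
        have he : 2*M - (M+1) = M - 1 := by omega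
        have he2 : (M+1) - 1 = M := by omega
        rw [he, he2]
        exact hF
    · -- n = 2M+1 odd, M ≥ 4; M = 4 (n = 9) special
      have hn2 : n = 2*M+1 := by omega
      subst hn2
      rcases Nat.lt_or_ge M 5 with hM5 | hM5
      · -- n = 9
        have hM4 : M = 4 := by omega
        subst hM4
        refine OonAux4.master c 9 5 hc (by omega) (by omega) ?_ ?_
        · decide
        · decide
      · -- M ≥ 5
        have hF := OonAux4.F_odd M hM5
        have hMM : M.factorial * M.factorial ≤ (M+1).factorial * (M-1).factorial := by
          have e4 : M.factorial = M * (M-1).factorial := by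
            obtain ⟨M', rfl⟩ : ∃ M', M = M' + 1 := ⟨M - 1, by omega⟩
            simp [Nat.factorial_succ]
          calc M.factorial * M.factorial = M.factorial * M * (M-1).factorial := by
                nth_rewrite 2 [e4]; ring
            _ ≤ M.factorial * (M+1) * (M-1).factorial := by
                have := Nat.mul_le_mul_right ((M-1).factorial)
                  (Nat.mul_le_mul_left (M.factorial) (show M ≤ M+1 by omega))
                exact this
            _ = (M+1).factorial * (M-1).factorial := by rw [Nat.factorial_succ]; ring
        refine OonAux4.master c (2*M+1) (M+1) hc (by omega) (by omega) ?_ ?_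
        · refine OonAux4.conv (2*M+1) (M+1) (by omega) (by omega) ?_
          have he : 2*M+1 - (M+1) = M := by omega
          have he2 : (M+1) - 1 = M := by omega
          rw [he, he2]
          calc 2^(2*M+1) * M.factorial * M.factorial
              = 2^(2*M+1) * (M.factorial * M.factorial) := by ring
            _ ≤ 2^(2*M+1) * ((M+1).factorial * (M-1).factorial) :=
                Nat.mul_le_mul_left _ hMM
            _ = 2^(2*M+1) * (M+1).factorial * (M-1).factorial := by ring
            _ ≤ (2*M+1).factorial := hF
        · refine OonAux4.conv (2*M+1) (M+2) (by omega) (by omega) ?_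
          have he : 2*M+1 - (M+2) = M - 1 := by omega
          have he2 : (M+2) - 1 = M + 1 := by omega
          rw [he, he2]
          exact hF
end
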